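/- The expected AP of a sequence of independent Bernoulli detections is maximized, over all permutations of the sequence, by any permutation that sorts the success probabilities in non-increasing order. -/

import Mathlib

open Finset

/-- Number of true detections among the first `k+1` (ranks `1..k+1`) entries. -/
def prefCount {N : ℕ} (b : Fin N → Bool) (k : Fin N) : ℕ :=
  (Finset.univ.filter (fun j : Fin N => j ≤ k ∧ b j = true)).card

/-- Total number of true detections. -/
def numTrue {N : ℕ} (b : Fin N → Bool) : ℕ :=
  (Finset.univ.filter (fun j : Fin N => b j = true)).card

/-- Average precision of a ranked binary detection sequence (0 if no true positives). -/
noncomputable def AP {N : ℕ} (b : Fin N → Bool) : ℝ :=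
  if numTrue b = 0 then 0 else
    (1 / (numTrue b : ℝ)) *
      ∑ k ∈ Finset.univ.filter (fun k : Fin N => b k = true),
        (prefCount b k : ℝ) / ((k : ℕ) + 1)

/-- Probability of outcome `b` for independent Bernoulli detections with parameters `p`. -/
noncomputable def outcomeWeight {N : ℕ} (p : Fin N → ℝ) (b : Fin N → Bool) : ℝ :=
  ∏ i, if b i then p i else 1 - p i

/-- Expected average precision of independent Bernoulli detections. -/
noncomputable def eAP {N : ℕ} (p : Fin N → ℝ) : ℝ :=
  ∑ b : Fin N → Bool, outcomeWeight p b * AP b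

/-!
Exchanging the parameters at adjacent ranks `m`, `m + 1` with `p m ≤ p (m + 1)` never lowers
the expected AP. Pair each outcome `b` with `b ∘ swap m (m + 1)`; the pair only matters when
`b m ≠ b (m + 1)`. If `b m` is the true detection, then `b` has the larger AP (its true detection
sits one rank earlier, all other precisions are unchanged), but under `p` it is the less likely
of the two; the exchange swaps the two probabilities.

Fix `τ`; among the orderings whose expected AP is at least that of `τ`, take one minimising the
potential `∑ k, k * p k`. It has no adjacent ascent, since exchanging one would strictly lower
the potential, so it is the sorted order.
-/

lemma comp_swap_eq_self {α β : Type*} [DecidableEq α] {f : α → β} {a b : α} (h : f a = f b) :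
    f ∘ Equiv.swap a b = f := by
  ext x
  rw [Function.comp_apply, Equiv.swap_apply_def]
  split_ifs with hxa hxb
  · rw [hxa, h]
  · rw [hxb, h]
  · rfl

section Rearrangement

variable {N : ℕ}

lemma antitone_of_adjacent_le {α : Type*} [Preorder α] (q : Fin N → α)
    (h : ∀ i j : Fin N, (j : ℕ) = i + 1 → q j ≤ q i) : Antitone q := by
  cases N with
  | zero => exact fun i => i.elim0
  | succ n => exact Fin.antitone_iff_succ_le.2 fun i => h _ _ (by simp)

lemma sum_index_mul_comp_swap_lt (q : Fin N → ℝ) {i j : Fin N} (hij : i < j) (hq : q i < q j) :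
    ∑ k : Fin N, ((k : ℕ) : ℝ) * q (Equiv.swap i j k) < ∑ k : Fin N, ((k : ℕ) : ℝ) * q k := by
  rw [← sub_neg, ← sum_sub_distrib, Fintype.sum_eq_add i j hij.ne]
  · have : ((i : ℕ) : ℝ) < (j : ℕ) := by exact_mod_cast hij
    simp only [Equiv.swap_apply_left, Equiv.swap_apply_right]
    nlinarith
  · rintro k ⟨hki, hkj⟩
    rw [Equiv.swap_apply_of_ne_of_ne hki hkj, sub_self]

theorem Antitone.map_comp_perm_le_of_swap_le {β : Type*} [Preorder β] {s : Fin N → ℝ}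
    (hs : Antitone s) (F : (Fin N → ℝ) → β)
    (hF : ∀ (π : Equiv.Perm (Fin N)) (i j : Fin N), (j : ℕ) = i + 1 → s (π i) < s (π j) →
      F (s ∘ π) ≤ F (s ∘ π ∘ Equiv.swap i j))
    (τ : Equiv.Perm (Fin N)) : F (s ∘ τ) ≤ F s := by
  classical
  obtain ⟨π, hπ, hmin⟩ :=
    (univ.filter fun π : Equiv.Perm (Fin N) => F (s ∘ τ) ≤ F (s ∘ π)).exists_min_image
      (fun π => ∑ k : Fin N, ((k : ℕ) : ℝ) * s (π k)) ⟨τ, by simp⟩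
  simp only [mem_filter, mem_univ, true_and] at hπ hmin
  have hanti : Antitone (s ∘ π) := antitone_of_adjacent_le _ fun i j hij => by
    by_contra! hlt
    refine (hmin (π * Equiv.swap i j) (hπ.trans (hF π i j hij hlt))).not_gt ?_
    exact sum_index_mul_comp_swap_lt (s ∘ π) (Fin.lt_def.2 (by omega)) hlt
  have hsπ : s ∘ π = s := Tuple.unique_antitone (τ := 1) hanti hs
  rwa [hsπ] at hπ

end Rearrangement

section AveragePrecision

variable {N : ℕ}

lemma numTrue_comp_perm (b : Fin N → Bool) (π : Equiv.Perm (Fin N)) :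
    numTrue (b ∘ π) = numTrue b :=
  card_equiv π (by simp)

lemma prefCount_comp_perm_of_forall_le_iff (b : Fin N → Bool) (π : Equiv.Perm (Fin N))
    {k : Fin N} (h : ∀ j, π j ≤ k ↔ j ≤ k) : prefCount (b ∘ π) k = prefCount b k :=
  card_equiv π (by simp [h])

lemma swap_le_iff_of_adjacent {m m' k : Fin N} (h : (m' : ℕ) = m + 1) (hk : k ≠ m) (j : Fin N) :
    Equiv.swap m m' j ≤ k ↔ j ≤ k := by
  rw [Ne, Fin.ext_iff] at hk
  rw [Equiv.swap_apply_def]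
  split_ifs with hjm hjm'
  · subst hjm; simp only [Fin.le_def]; omega
  · subst hjm'; simp only [Fin.le_def]; omega
  · rfl

lemma prefCount_of_adjacent_of_false {b : Fin N → Bool} {m m' : Fin N} (h : (m' : ℕ) = m + 1)
    (hb : b m' = false) : prefCount b m' = prefCount b m := by
  unfold prefCount
  congr 1
  ext j
  rcases eq_or_ne j m' with rfl | hj
  · simp [hb]
  · simp only [mem_filter, mem_univ, true_and, Fin.le_def]
    rw [Ne, Fin.ext_iff] at hj
    exact and_congr_left fun _ => by omega

lemma AP_comp_swap_le {b : Fin N → Bool} {m m' : Fin N} (h : (m' : ℕ) = m + 1)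
    (hbm : b m = true) (hbm' : b m' = false) : AP (b ∘ Equiv.swap m m') ≤ AP b := by
  set e := Equiv.swap m m'
  have hne : m' ≠ m := by rintro rfl; omega
  have hsum : ∑ k ∈ univ.filter (fun k => (b ∘ e) k = true), (prefCount (b ∘ e) k : ℝ) / (k + 1)
      ≤ ∑ k ∈ univ.filter (fun k => b k = true), (prefCount b k : ℝ) / (k + 1) := by
    rw [sum_filter, sum_filter, ← Equiv.sum_comp e]
    refine sum_le_sum fun k _ => ?_
    simp only [Function.comp_apply, e, Equiv.swap_apply_self]
    split_ifs with hbk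
    · rcases eq_or_ne k m with rfl | hkm
      · rw [Equiv.swap_apply_left, prefCount_comp_perm_of_forall_le_iff b e
          (swap_le_iff_of_adjacent h hne), prefCount_of_adjacent_of_false h hbm', h]
        gcongr
        simp
      · have hkm' : k ≠ m' := by rintro rfl; simp [hbm'] at hbk
        rw [Equiv.swap_apply_of_ne_of_ne hkm hkm',
          prefCount_comp_perm_of_forall_le_iff b e (swap_le_iff_of_adjacent h hkm)]
    · exact le_rfl
  unfold AP
  rw [numTrue_comp_perm]
  split_ifs
  · exact le_rfl
  · exact mul_le_mul_of_nonneg_left hsum (by positivity)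

end AveragePrecision

section ExpectedAveragePrecision

variable {N : ℕ}

lemma outcomeWeight_comp_perm (q : Fin N → ℝ) (b : Fin N → Bool) (π : Equiv.Perm (Fin N)) :
    outcomeWeight (q ∘ π) b = outcomeWeight q (b ∘ π.symm) := by
  simpa [outcomeWeight] using Equiv.prod_comp π fun j => if b (π.symm j) then q j else 1 - q j

lemma outcomeWeight_eq_mul_prod_compl (q : Fin N → ℝ) (b : Fin N → Bool) {m m' : Fin N}
    (h : m ≠ m') :
    outcomeWeight q b = (if b m then q m else 1 - q m) * (if b m' then q m' else 1 - q m') *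
      ∏ i ∈ {m, m'}ᶜ, if b i then q i else 1 - q i := by
  rw [outcomeWeight, ← prod_mul_prod_compl {m, m'}, prod_pair h]

lemma outcomeWeight_le_comp_swap {q : Fin N → ℝ} (hq : ∀ i, 0 ≤ q i ∧ q i ≤ 1)
    {b : Fin N → Bool} {m m' : Fin N} (h : m ≠ m') (hle : q m ≤ q m')
    (hbm : b m = true) (hbm' : b m' = false) :
    outcomeWeight q b ≤ outcomeWeight q (b ∘ Equiv.swap m m') := by
  have hrest : (∏ i ∈ {m, m'}ᶜ, if (b ∘ Equiv.swap m m') i then q i else 1 - q i)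
      = ∏ i ∈ {m, m'}ᶜ, if b i then q i else 1 - q i := by
    refine prod_congr rfl fun i hi => ?_
    simp only [mem_compl, mem_insert, mem_singleton, not_or] at hi
    rw [Function.comp_apply, Equiv.swap_apply_of_ne_of_ne hi.1 hi.2]
  have hrest_nonneg : 0 ≤ ∏ i ∈ {m, m'}ᶜ, if b i then q i else 1 - q i :=
    prod_nonneg fun i _ => by split_ifs <;> linarith [hq i]
  rw [outcomeWeight_eq_mul_prod_compl q b h, outcomeWeight_eq_mul_prod_compl q _ h, hrest]
  simp only [Function.comp_apply, Equiv.swap_apply_left, Equiv.swap_apply_right, hbm, hbm',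
    if_true, Bool.false_eq_true, if_false]
  nlinarith [mul_nonneg (sub_nonneg.2 hle) hrest_nonneg]

lemma outcomeWeight_comp_swap_sub_mul_AP_sub_nonneg {q : Fin N → ℝ}
    (hq : ∀ i, 0 ≤ q i ∧ q i ≤ 1) {m m' : Fin N} (h : (m' : ℕ) = m + 1) (hle : q m ≤ q m')
    (b : Fin N → Bool) :
    0 ≤ (outcomeWeight q (b ∘ Equiv.swap m m') - outcomeWeight q b) *
      (AP b - AP (b ∘ Equiv.swap m m')) := by
  set e := Equiv.swap m m'
  have hne : m ≠ m' := by rintro rfl; omega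
  have hgain_of_true_false : ∀ b : Fin N → Bool, b m = true → b m' = false →
      0 ≤ outcomeWeight q (b ∘ e) - outcomeWeight q b ∧ 0 ≤ AP b - AP (b ∘ e) :=
    fun b hbm hbm' => ⟨sub_nonneg.2 (outcomeWeight_le_comp_swap hq hne hle hbm hbm'),
      sub_nonneg.2 (AP_comp_swap_le h hbm hbm')⟩
  cases hbm : b m <;> cases hbm' : b m'
  · simp [e, comp_swap_eq_self (hbm.trans hbm'.symm)]
  · obtain ⟨hw, hap⟩ := hgain_of_true_false (b ∘ e) (by simp [e, hbm']) (by simp [e, hbm])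
    have hee : (b ∘ e) ∘ e = b := by ext i; simp [e]
    rw [hee] at hw hap
    exact mul_nonneg_of_nonpos_of_nonpos (by linarith) (by linarith)
  · exact mul_nonneg (hgain_of_true_false b hbm hbm').1 (hgain_of_true_false b hbm hbm').2
  · simp [e, comp_swap_eq_self (hbm.trans hbm'.symm)]

lemma eAP_le_eAP_comp_swap {q : Fin N → ℝ} (hq : ∀ i, 0 ≤ q i ∧ q i ≤ 1) {m m' : Fin N}
    (h : (m' : ℕ) = m + 1) (hle : q m ≤ q m') : eAP q ≤ eAP (q ∘ Equiv.swap m m') := by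
  set e := Equiv.swap m m'
  have hee : ∀ b : Fin N → Bool, (b ∘ e) ∘ e = b := fun b => by ext i; simp [e]
  have hinv : Function.Involutive fun b : Fin N → Bool => b ∘ e := hee
  have hdiff : eAP (q ∘ e) - eAP q
      = ∑ b, (outcomeWeight q (b ∘ e) - outcomeWeight q b) * AP b := by
    simp only [eAP, outcomeWeight_comp_perm, e, Equiv.symm_swap, ← sum_sub_distrib, sub_mul]
  have hsymm : 2 * (eAP (q ∘ e) - eAP q)
      = ∑ b, (outcomeWeight q (b ∘ e) - outcomeWeight q b) * (AP b - AP (b ∘ e)) := by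
    rw [hdiff, two_mul]
    nth_rewrite 2 [← hinv.bijective.sum_comp]
    rw [← sum_add_distrib]
    refine sum_congr rfl fun b _ => ?_
    rw [hee b]
    ring
  have hsum_nonneg := sum_nonneg fun b (_ : b ∈ univ) =>
    outcomeWeight_comp_swap_sub_mul_AP_sub_nonneg hq h hle b
  linarith

end ExpectedAveragePrecision

/-- Expected AP is maximized, over all orderings, by any permutation sorting the
success probabilities in non-increasing order. -/
theorem stmt1 {N : ℕ} (p : Fin N → ℝ) (hp : ∀ i, 0 ≤ p i ∧ p i ≤ 1)
    (σ : Equiv.Perm (Fin N)) (hσ : ∀ i j : Fin N, i ≤ j → p (σ j) ≤ p (σ i)) :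
    ∀ τ : Equiv.Perm (Fin N), eAP (p ∘ τ) ≤ eAP (p ∘ σ) := by
  intro τ
  have hsorted : Antitone (p ∘ σ) := fun i j hij => hσ i j hij
  have hτ : p ∘ τ = (p ∘ σ) ∘ (σ.symm * τ) := by ext; simp
  rw [hτ]
  exact hsorted.map_comp_perm_le_of_swap_le eAP
    (fun _ _ _ hadj hlt => eAP_le_eAP_comp_swap (fun _ => hp _) hadj hlt.le) _
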